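/- arXiv:math/0511100 — 4 statements merged into one kernel-verified Lean document; each statement's English description precedes it below -/
import Mathlib

section
/- Let R be a Dedekind domain, G an affine flat R-group scheme, and M an R-flat G-module such that H^1(G,M) is a flat R-module. Then for every R-algebra S the canonical map ρ_S: S ⊗_R M^G → (S ⊗_R M)^{S⊗G}, s ⊗ m ↦ s ⊗ m, is an isomorphism. -/
open TensorProduct

noncomputable section

/-- The `R`-linear map `m ↦ m ⊗ₜ 1`. -/
def tmulOne (R M C : Type*) [CommRing R] [CommRing C] [Algebra R C]
    [AddCommGroup M] [Module R M] : M →ₗ[R] M ⊗[R] C :=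
  (TensorProduct.mk R M C).flip 1

/-- The invariants `M^G = {m | ω m = m ⊗ 1}` of a `C`-comodule `M`, where `C = R[G]`. -/
def comodInvariants {R C M : Type*} [CommRing R] [CommRing C] [Algebra R C]
    [AddCommGroup M] [Module R M] (ω : M →ₗ[R] M ⊗[R] C) : Submodule R M :=
  LinearMap.ker (ω - tmulOne R M C)

/-- The invariants `(S ⊗ M)^{S ⊗ G}` of the base-changed comodule `S ⊗ M` over `S ⊗ C`
(under the canonical identification `(S ⊗ M) ⊗[S] (S ⊗ C) ≃ S ⊗ (M ⊗ C)`). -/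
def comodInvariantsBaseChange {R C M : Type*} [CommRing R] [CommRing C] [Algebra R C]
    [AddCommGroup M] [Module R M] (ω : M →ₗ[R] M ⊗[R] C)
    (S : Type*) [CommRing S] [Algebra R S] : Submodule S (S ⊗[R] M) :=
  LinearMap.ker ((ω - tmulOne R M C).baseChange S)

/-- The canonical map `ρ_S : S ⊗ M^G → (S ⊗ M)^{S⊗G}`, `s ⊗ m ↦ s ⊗ m`. -/
def rhoMap {R C M : Type*} [CommRing R] [CommRing C] [Algebra R C]
    [AddCommGroup M] [Module R M] (ω : M →ₗ[R] M ⊗[R] C)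
    (S : Type*) [CommRing S] [Algebra R S] :
    S ⊗[R] ↥(comodInvariants ω) →ₗ[S] ↥(comodInvariantsBaseChange ω S) :=
  LinearMap.codRestrict _ ((comodInvariants ω).subtype.baseChange S) (fun x => by
    have h0 : (ω - tmulOne R M C) ∘ₗ (comodInvariants ω).subtype = 0 := by
      ext m
      exact m.2
    have h : ((ω - tmulOne R M C).baseChange S) ∘ₗ
        ((comodInvariants ω).subtype.baseChange S) = 0 := by
      rw [← LinearMap.baseChange_comp, h0]
      ext v
      simp
    simp only [comodInvariantsBaseChange, LinearMap.mem_ker]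
    exact congrFun (congrArg (fun f => f.toFun) h) x)

/-- The map `φ_S : S ⊗ V → (S ⊗ M)^{S⊗G}` induced by `φ : V → M^G`,
`φ_S (s ⊗ v) = s ⊗ φ v`. -/
def phiMap {R C M V : Type*} [CommRing R] [CommRing C] [Algebra R C]
    [AddCommGroup M] [Module R M] [AddCommGroup V] [Module R V]
    (ω : M →ₗ[R] M ⊗[R] C) (φ : V →ₗ[R] ↥(comodInvariants ω))
    (S : Type*) [CommRing S] [Algebra R S] :
    S ⊗[R] V →ₗ[S] ↥(comodInvariantsBaseChange ω S) :=
  (rhoMap ω S) ∘ₗ (φ.baseChange S)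

universe u v

/-- The boundary map `δ⁰ = -ω + 1_M ⊗ u : M → M ⊗ C` of the cobar complex. -/
def cobarD0 {R C M : Type*} [CommRing R] [CommRing C] [Algebra R C]
    [AddCommGroup M] [Module R M] (ω : M →ₗ[R] M ⊗[R] C) : M →ₗ[R] M ⊗[R] C :=
  tmulOne R M C - ω

/-- The boundary map `δ¹ = ω ⊗ 1_C - 1_M ⊗ Δ_C + 1_{M⊗C} ⊗ u : M ⊗ C → (M ⊗ C) ⊗ C`
of the cobar complex, where `Δ` is the comultiplication of `C`. -/
def cobarD1 {R C M : Type*} [CommRing R] [CommRing C] [Algebra R C]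
    [AddCommGroup M] [Module R M] (ω : M →ₗ[R] M ⊗[R] C)
    (Δ : C →ₗ[R] C ⊗[R] C) : (M ⊗[R] C) →ₗ[R] (M ⊗[R] C) ⊗[R] C :=
  LinearMap.rTensor C ω
    - (TensorProduct.assoc R M C C).symm.toLinearMap ∘ₗ LinearMap.lTensor M Δ
    + tmulOne R (M ⊗[R] C) C

/-- The first cohomology `H¹(G, M)` of the cobar complex
`M → M ⊗ C → (M ⊗ C) ⊗ C → ⋯` computing the `G`-cohomology of the comodule `M`. -/
abbrev cobarH1 {R C M : Type*} [CommRing R] [CommRing C] [Algebra R C]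
    [AddCommGroup M] [Module R M] (ω : M →ₗ[R] M ⊗[R] C)
    (Δ : C →ₗ[R] C ⊗[R] C) : Type _ :=
  ↥(LinearMap.ker (cobarD1 ω Δ)) ⧸
    ((LinearMap.range (cobarD0 ω)).comap (LinearMap.ker (cobarD1 ω Δ)).subtype)

/-! Since `H¹(G, M)` and `(M ⊗ C) ⊗ C` are torsion-free, so is `(M ⊗ C) / im δ⁰`; over a Dedekind
domain this makes both `M / M^G ≅ im δ⁰ ⊆ M ⊗ C` and `(M ⊗ C) / im δ⁰` flat. Tensoring the exact
sequence `0 → M^G → M → M ⊗ C` with `S` then stays exact: the first flat quotient keeps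
`S ⊗ M^G → S ⊗ M` injective, the second keeps `S ⊗ im δ⁰ → S ⊗ (M ⊗ C)` injective. -/

open LinearMap Module

section TorsionFree

variable {R A B D : Type*} [CommRing R] [AddCommGroup A] [Module R A] [AddCommGroup B]
  [Module R B] [AddCommGroup D] [Module R D]

theorem Submodule.isTorsionFree_quotient_iff {p : Submodule R B} :
    IsTorsionFree R (B ⧸ p) ↔ ∀ ⦃r : R⦄, IsRegular r → ∀ ⦃x : B⦄, r • x ∈ p → x ∈ p := by
  constructor
  · intro _ r hr x hx
    rw [← Submodule.Quotient.mk_eq_zero] at hx ⊢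
    apply hr.isSMulRegular
    change r • _ = r • (0 : B ⧸ p)
    rw [smul_zero, ← Submodule.Quotient.mk_smul, hx]
  · intro h
    refine ⟨fun r hr y z hyz => ?_⟩
    obtain ⟨y, rfl⟩ := Submodule.Quotient.mk_surjective p y
    obtain ⟨z, rfl⟩ := Submodule.Quotient.mk_surjective p z
    change r • _ = r • _ at hyz
    rw [← Submodule.Quotient.mk_smul, ← Submodule.Quotient.mk_smul, Submodule.Quotient.eq,
      ← smul_sub] at hyz
    exact (Submodule.Quotient.eq p).mpr (h hr hyz)

theorem isTorsionFree_quotient_range_of_homology (d₀ : A →ₗ[R] B) (d₁ : B →ₗ[R] D)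
    (hd : d₁ ∘ₗ d₀ = 0) [IsTorsionFree R D]
    [IsTorsionFree R (ker d₁ ⧸ (range d₀).comap (ker d₁).subtype)] :
    IsTorsionFree R (B ⧸ range d₀) := by
  rw [Submodule.isTorsionFree_quotient_iff]
  intro r hr x hx
  have hcycle : x ∈ ker d₁ := by
    have hrx : d₁ (r • x) = 0 := range_le_ker_iff.mpr hd hx
    rw [map_smul] at hrx
    exact hr.isSMulRegular (show r • d₁ x = r • 0 by rw [hrx, smul_zero])
  exact Submodule.isTorsionFree_quotient_iff.mp ‹_› hr (x := (⟨x, hcycle⟩ : ker d₁)) hx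

end TorsionFree

section BaseChange

variable {R M N : Type*} [CommRing R] [AddCommGroup M] [Module R M] [AddCommGroup N] [Module R N]
  (S : Type*) [CommRing S] [Algebra R S]

theorem Submodule.baseChange_subtype_injective (p : Submodule R M) [Flat R (M ⧸ p)] :
    Function.Injective (p.subtype.baseChange S) :=
  lTensor_injective_of_exact_of_flat p.mkQ p.mkQ_surjective p.subtype p.injective_subtype
    (exact_subtype_mkQ p) S

theorem LinearMap.ker_baseChange_eq_range_baseChange_ker_subtype (d : M →ₗ[R] N)
    [Flat R (N ⧸ range d)] :
    ker (d.baseChange S) = range ((ker d).subtype.baseChange S) := by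
  refine le_antisymm (fun x hx => ?_) (range_le_ker_iff.mpr ?_)
  · have hx' : (d.rangeRestrict.baseChange S) x = 0 :=
      (range d).baseChange_subtype_injective S (by
        rwa [map_zero, ← comp_apply, ← baseChange_comp, subtype_comp_codRestrict])
    have hexact : Function.Exact ((ker d).subtype.lTensor S) (d.rangeRestrict.lTensor S) :=
      lTensor_exact S (exact_iff.mpr (by rw [ker_rangeRestrict, Submodule.range_subtype]))
        d.surjective_rangeRestrict
    exact (hexact x).mp hx'
  · rw [← baseChange_comp, (exact_subtype_ker_map d).linearMap_comp_eq_zero, baseChange_zero]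

theorem LinearMap.bijective_codRestrict_baseChange_ker_subtype (d : M →ₗ[R] N)
    [Flat R (M ⧸ ker d)] [Flat R (N ⧸ range d)]
    (h : ∀ x, (ker d).subtype.baseChange S x ∈ ker (d.baseChange S)) :
    Function.Bijective (codRestrict _ ((ker d).subtype.baseChange S) h) := by
  refine ⟨fun x y hxy => (ker d).baseChange_subtype_injective S (congrArg Subtype.val hxy), ?_⟩
  rintro ⟨x, hx⟩
  rw [d.ker_baseChange_eq_range_baseChange_ker_subtype S] at hx
  obtain ⟨y, rfl⟩ := hx
  exact ⟨y, rfl⟩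

end BaseChange

theorem cobarD0_eq_neg {R C M : Type*} [CommRing R] [CommRing C] [Algebra R C]
    [AddCommGroup M] [Module R M] (ω : M →ₗ[R] M ⊗[R] C) :
    cobarD0 ω = -(ω - tmulOne R M C) :=
  (neg_sub _ _).symm

theorem cobarD1_comp_cobarD0 {R C M : Type*} [CommRing R] [CommRing C] [Bialgebra R C]
    [AddCommGroup M] [Module R M] (ω : M →ₗ[R] M ⊗[R] C)
    (hcoassoc : ∀ m : M,
      (TensorProduct.assoc R M C C) ((LinearMap.rTensor C ω) (ω m)) =
        (LinearMap.lTensor M (Coalgebra.comul (R := R) (A := C))) (ω m)) :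
    cobarD1 ω (Coalgebra.comul (R := R) (A := C)) ∘ₗ cobarD0 ω = 0 := by
  ext m
  have hcoassoc' : (TensorProduct.assoc R M C C).symm (lTensor M Coalgebra.comul (ω m)) =
      rTensor C ω (ω m) := by
    rw [← hcoassoc m, LinearEquiv.symm_apply_apply]
  simp only [cobarD0, cobarD1, tmulOne, comp_apply, LinearMap.sub_apply, LinearMap.add_apply,
    map_sub, LinearEquiv.coe_coe, flip_apply, TensorProduct.mk_apply, rTensor_tmul, lTensor_tmul,
    Bialgebra.comul_one, Algebra.TensorProduct.one_def, TensorProduct.assoc_symm_tmul, hcoassoc',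
    LinearMap.zero_apply]
  abel

theorem rhoMap_bijective_of_cobarH1_flat_general
    {R C M : Type*} [CommRing R] [IsDedekindDomain R]
    [CommRing C] [HopfAlgebra R C] [Module.Flat R C]
    [AddCommGroup M] [Module R M] [Module.Flat R M]
    (ω : M →ₗ[R] M ⊗[R] C)
    (hcoassoc : ∀ m : M,
      (TensorProduct.assoc R M C C) ((LinearMap.rTensor C ω) (ω m)) =
        (LinearMap.lTensor M (Coalgebra.comul (R := R) (A := C))) (ω m))
    (hflat : Module.Flat R (cobarH1 ω (Coalgebra.comul (R := R) (A := C))))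
    (S : Type v) [CommRing S] [Algebra R S] :
    Function.Bijective (rhoMap ω S) := by
  set d := ω - tmulOne R M C
  have : Flat R (M ⧸ ker d) := .of_linearEquiv d.quotKerEquivRange
  have : IsTorsionFree R ((M ⊗[R] C) ⧸ range (cobarD0 ω)) :=
    isTorsionFree_quotient_range_of_homology _ _ (cobarD1_comp_cobarD0 ω hcoassoc)
  have : Flat R ((M ⊗[R] C) ⧸ range d) := by
    rw [← range_neg, ← cobarD0_eq_neg]
    infer_instance
  exact d.bijective_codRestrict_baseChange_ker_subtype S _

/-- Let `R` be a Dedekind domain, `G` an affine flat `R`-group scheme with flat Hopf algebra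
`C = R[G]`, and `M` an `R`-flat `G`-module such that `H¹(G, M)` is a flat `R`-module.
Then for every `R`-algebra `S` the canonical map
`ρ_S : S ⊗ M^G → (S ⊗ M)^{S⊗G}`, `s ⊗ m ↦ s ⊗ m`, is an isomorphism. -/
theorem rhoMap_bijective_of_cobarH1_flat
    {R C M : Type*} [CommRing R] [IsDomain R] [IsDedekindDomain R]
    [CommRing C] [HopfAlgebra R C] [Module.Flat R C]
    [AddCommGroup M] [Module R M] [Module.Flat R M]
    (ω : M →ₗ[R] M ⊗[R] C)
    (hcounit : ∀ m : M,
      (TensorProduct.rid R M) ((LinearMap.lTensor M (Coalgebra.counit (R := R) (A := C))) (ω m)) = m)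
    (hcoassoc : ∀ m : M,
      (TensorProduct.assoc R M C C) ((LinearMap.rTensor C ω) (ω m)) =
        (LinearMap.lTensor M (Coalgebra.comul (R := R) (A := C))) (ω m))
    (hflat : Module.Flat R (cobarH1 ω (Coalgebra.comul (R := R) (A := C))))
    (S : Type v) [CommRing S] [Algebra R S] :
    Function.Bijective (rhoMap ω S) :=
  rhoMap_bijective_of_cobarH1_flat_general ω hcoassoc hflat S
end
end

section
/- Let R be a discrete valuation ring with uniformizer t, A a Noetherian R-algebra, V a finitely generated A-module, M a torsion-free R-module, and φ: V → M an R-linear map such that the induced map V/tV → M ⊗_R R/tR (or equivalently, the map sending the class of v to the class of φ(v)) is injective. Then V is torsion-free, hence flat, as an R-module. -/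
/-!
Over a DVR, torsion is `t`-power torsion. If `t ^ n • v = 0` then `t ^ n • φ v = 0`, so `φ v = 0`
since `M` has no `t`-torsion, and the injectivity of `V/tV → M/tM` makes `v` divisible by `t`.
Thus the `t`-power torsion `T` of `V`, a finitely generated `A`-module because `A` is Noetherian,
satisfies `T = t • T`; by Nakayama some `c * t` acts as the identity on `T`, and every element
of `T` is killed by a power of it. Over a DVR, torsion-free modules are flat.
-/

open Module Submodule

theorem Submodule.mem_torsion'_powers_iff {A V : Type*} [CommRing A] [AddCommGroup V]
    [Module A V] {a : A} {v : V} :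
    v ∈ torsion' A V (Submonoid.powers a) ↔ ∃ n : ℕ, a ^ n • v = 0 := by
  simp [mem_torsion'_iff, Submonoid.smul_def, Submonoid.mem_powers_iff]

theorem Submodule.torsion'_powers_eq_bot_of_divisible {A V : Type*} [CommRing A]
    [AddCommGroup V] [Module A V] [IsNoetherian A V] {a : A}
    (h : ∀ v ∈ torsion' A V (Submonoid.powers a), ∃ w, v = a • w) :
    torsion' A V (Submonoid.powers a) = ⊥ := by
  set T := torsion' A V (Submonoid.powers a)
  have hle : T ≤ Ideal.span {a} • T := by
    intro v hv
    obtain ⟨w, rfl⟩ := h v hv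
    obtain ⟨n, hn⟩ := mem_torsion'_powers_iff.mp hv
    have hw : w ∈ T := mem_torsion'_powers_iff.mpr ⟨n + 1, by rwa [pow_succ, mul_smul]⟩
    exact smul_mem_smul (Ideal.mem_span_singleton_self a) hw
  obtain ⟨r, hr, hrT⟩ :=
    exists_mem_and_smul_eq_self_of_fg_of_le_smul _ T (IsNoetherian.noetherian T) hle
  obtain ⟨c, rfl⟩ := Ideal.mem_span_singleton'.mp hr
  refine eq_bot_iff.mpr fun v hv => ?_
  obtain ⟨n, hn⟩ := mem_torsion'_powers_iff.mp hv
  have hfix : ∀ k : ℕ, (c * a) ^ k • v = v := by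
    intro k
    induction k with
    | zero => rw [pow_zero, one_smul]
    | succ k ih => rw [pow_succ, mul_smul, hrT v hv, ih]
  rw [mem_bot, ← hfix n, mul_pow, mul_smul, hn, smul_zero]

theorem IsDiscreteValuationRing.isTorsionFree_of_isSMulRegular {R V : Type*} [CommRing R]
    [IsDomain R] [IsDiscreteValuationRing R] [AddCommGroup V] [Module R V] {t : R}
    (ht : Irreducible t) (hV : IsSMulRegular V t) : IsTorsionFree R V where
  isSMulRegular r hr := by
    obtain ⟨n, u, rfl⟩ := eq_unit_mul_pow_irreducible hr.ne_zero ht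
    exact u.isUnit.isSMulRegular V |>.mul (hV.pow n)

/-- Let `R` be a discrete valuation ring with uniformizer `t`, `A` a Noetherian
`R`-algebra, `V` a finitely generated `A`-module, `M` an `R`-module with no nonzero
`t`-torsion, and `φ : V → M` an `R`-linear map such that the induced map
`V/tV → M/tM` is injective. Then `V` is torsion-free, hence flat, as an `R`-module. -/
theorem torsionFree_flat_of_dvr
    {R A V M : Type*} [CommRing R] [IsDomain R] [IsDiscreteValuationRing R]
    (t : R) (ht : Irreducible t)
    [CommRing A] [Algebra R A] [IsNoetherianRing A]
    [AddCommGroup V] [Module R V] [Module A V] [IsScalarTower R A V] [Module.Finite A V]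
    [AddCommGroup M] [Module R M]
    (hM : ∀ m : M, t • m = 0 → m = 0)
    (φ : V →ₗ[R] M)
    (hinj : ∀ v : V, (∃ m : M, φ v = t • m) → ∃ w : V, v = t • w) :
    (∀ (r : R) (v : V), r • v = 0 → r = 0 ∨ v = 0) ∧ Module.Flat R V := by
  have hMreg : IsSMulRegular M t := isSMulRegular_iff_right_eq_zero_of_smul.mpr hM
  have hdiv : ∀ v ∈ torsion' A V (Submonoid.powers (algebraMap R A t)),
      ∃ w, v = algebraMap R A t • w := by
    intro v hv
    obtain ⟨n, hn⟩ := mem_torsion'_powers_iff.mp hv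
    rw [← map_pow, algebraMap_smul] at hn
    have hφ : φ v = 0 := (hMreg.pow n).right_eq_zero_of_smul (by rw [← map_smul, hn, map_zero])
    simpa only [algebraMap_smul] using hinj v ⟨0, by rw [hφ, smul_zero]⟩
  have hVreg : IsSMulRegular V t := isSMulRegular_iff_right_eq_zero_of_smul.mpr fun v hv => by
    have hv' : v ∈ torsion' A V (Submonoid.powers (algebraMap R A t)) :=
      mem_torsion'_powers_iff.mpr ⟨1, by rwa [pow_one, algebraMap_smul]⟩
    simpa [torsion'_powers_eq_bot_of_divisible hdiv] using hv'
  have : IsTorsionFree R V := IsDiscreteValuationRing.isTorsionFree_of_isSMulRegular ht hVreg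
  exact ⟨fun r v => smul_eq_zero.mp, inferInstance⟩
end

section
/- Let R be a Dedekind domain, A a Noetherian R-algebra, V a finitely generated A-module, N a torsion-free R-module, and φ: V → N an R-linear map such that for every maximal ideal 𝔪 of R the induced map V/𝔪V → N/𝔪N is injective. Then V is a flat R-module. -/
/-! The `R`-torsion `T` of `V` is an `A`-submodule, finitely generated since `A` is Noetherian.
As `N` is torsion-free, `φ` kills `T`, so `T ⊆ 𝔪V` for every maximal ideal `𝔪` of `R`; since `V/T`
is torsion-free, hence flat over the Dedekind domain `R`, this gives `T = 𝔪T`. If `T ≠ 0`, a maximal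
ideal `P ⊇ Ann_A T` of `A` contains a nonzero `r ∈ R` killing `T`, so `𝔪 = P ∩ R` is maximal, and
Nakayama applied to `T = (𝔪A)T` yields `1 ∈ 𝔪A + Ann_A T ⊆ P`. -/

open Submodule
open scoped nonZeroDivisors

theorem Submodule.FG.exists_smul_eq_zero_of_le_torsion' {A M S : Type*} [CommSemiring A]
    [AddCommMonoid M] [Module A M] [CommMonoid S] [DistribMulAction S M] [SMulCommClass S A M]
    {T : Submodule A M} (hT : T.FG) (h : T ≤ torsion' A M S) :
    ∃ s : S, ∀ x ∈ T, s • x = 0 := by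
  classical
  obtain ⟨g, rfl⟩ := hT
  choose! s hs using fun x (hx : x ∈ g) => (mem_torsion'_iff S x).mp (h (subset_span hx))
  refine ⟨∏ x ∈ g, s x, fun x hx => ?_⟩
  induction hx using span_induction with
  | mem x hx => rw [← Finset.prod_erase_mul _ _ hx, mul_smul, hs x hx, smul_zero]
  | zero => exact smul_zero _
  | add x y _ _ hx hy => rw [smul_add, hx, hy, add_zero]
  | smul a x _ hx => rw [smul_comm, hx, smul_zero]

theorem Submodule.FG.sup_annihilator_eq_top_of_le_smul {A M : Type*} [CommRing A]
    [AddCommGroup M] [Module A M] {I : Ideal A} {N : Submodule A M} (hN : N.FG)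
    (h : N ≤ I • N) : I ⊔ N.annihilator = ⊤ := by
  obtain ⟨u, hu1, hu⟩ := exists_sub_one_mem_and_smul_eq_zero_of_fg_of_le_smul I N hN h
  rw [Ideal.eq_top_iff_one, ← sub_sub_cancel u 1]
  exact sub_mem (mem_sup_right (mem_annihilator.mpr hu)) (mem_sup_left hu1)

theorem Submodule.eq_bot_of_le_torsion'_of_le_smul {R A M : Type*} [CommRing R] [Nontrivial R]
    [Ring.DimensionLEOne R] [CommRing A] [Algebra R A] [AddCommGroup M] [Module R M]
    [Module A M] [IsScalarTower R A M] {T : Submodule A M} (hT : T.FG)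
    (htors : T ≤ torsion' A M R⁰)
    (hsmul : ∀ 𝔪 : Ideal R, 𝔪.IsMaximal → T.restrictScalars R ≤ 𝔪 • T.restrictScalars R) :
    T = ⊥ := by
  by_contra hne
  obtain ⟨P, hP, hannP⟩ := Ideal.exists_le_maximal _ (mt annihilator_eq_top_iff.mp hne)
  obtain ⟨r, hr⟩ := hT.exists_smul_eq_zero_of_le_torsion' htors
  have hrP : (r : R) ∈ P.comap (algebraMap R A) :=
    hannP <| mem_annihilator.mpr fun x hx => by rw [algebraMap_smul]; exact hr x hx
  have hp : (P.comap (algebraMap R A)).IsMaximal :=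
    Ideal.IsPrime.isMaximal inferInstance
      ((Submodule.ne_bot_iff _).mpr ⟨r, hrP, nonZeroDivisors.coe_ne_zero r⟩)
  have hle : T ≤ (P.comap (algebraMap R A)).map (algebraMap R A) • T := by
    rw [← restrictScalars_le R, Ideal.smul_restrictScalars]
    exact hsmul _ hp
  exact hP.ne_top <| top_le_iff.mp <|
    hT.sup_annihilator_eq_top_of_le_smul hle ▸ sup_le Ideal.map_comap_le hannP

theorem flat_of_injective_mod_maximal_general
    {R A V N : Type*} [CommRing R] [IsDedekindDomain R]
    [CommRing A] [Algebra R A] [IsNoetherianRing A]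
    [AddCommGroup V] [Module R V] [Module A V] [IsScalarTower R A V] [Module.Finite A V]
    [AddCommGroup N] [Module R N]
    (hN : ∀ (r : R) (x : N), r • x = 0 → r = 0 ∨ x = 0)
    (φ : V →ₗ[R] N)
    (hinj : ∀ (𝔪 : Ideal R), 𝔪.IsMaximal →
      ∀ v : V, φ v ∈ (𝔪 • ⊤ : Submodule R N) → v ∈ (𝔪 • ⊤ : Submodule R V)) :
    Module.Flat R V := by
  have hker : torsion R V ≤ LinearMap.ker φ := fun v ⟨a, hav⟩ =>
    (hN a (φ v) (by rw [← map_smul, ← Submonoid.smul_def, hav, map_zero])).resolve_left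
      (nonZeroDivisors.coe_ne_zero a)
  have htors_le_smul (𝔪 : Ideal R) (h𝔪 : 𝔪.IsMaximal) : torsion R V ≤ 𝔪 • torsion R V := by
    have hflat := LinearMap.ker_inf_smul_top_eq_smul_of_flat 𝔪 _ (torsion R V).mkQ_surjective
    rw [ker_mkQ] at hflat
    exact hflat ▸ le_inf le_rfl fun v hv => hinj 𝔪 h𝔪 v (hker hv ▸ zero_mem _)
  have hT : (torsion' A V R⁰).restrictScalars R = torsion R V := rfl
  rw [IsDedekindDomain.flat_iff_torsion_eq_bot, ← hT,
    eq_bot_of_le_torsion'_of_le_smul (IsNoetherian.noetherian _) le_rfl (hT ▸ htors_le_smul),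
    restrictScalars_bot]

/-- Let `R` be a Dedekind domain, `A` a Noetherian `R`-algebra, `V` a finitely generated
`A`-module, `N` a torsion-free `R`-module, and `φ : V → N` an `R`-linear map such that for
every maximal ideal `𝔪` of `R` the induced map `V/𝔪V → N/𝔪N` is injective. Then `V` is a
flat `R`-module. -/
theorem flat_of_injective_mod_maximal
    {R A V N : Type*} [CommRing R] [IsDomain R] [IsDedekindDomain R]
    [CommRing A] [Algebra R A] [IsNoetherianRing A]
    [AddCommGroup V] [Module R V] [Module A V] [IsScalarTower R A V] [Module.Finite A V]
    [AddCommGroup N] [Module R N]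
    (hN : ∀ (r : R) (x : N), r • x = 0 → r = 0 ∨ x = 0)
    (φ : V →ₗ[R] N)
    (hinj : ∀ (𝔪 : Ideal R), 𝔪.IsMaximal →
      ∀ v : V, φ v ∈ (𝔪 • ⊤ : Submodule R N) → v ∈ (𝔪 • ⊤ : Submodule R V)) :
    Module.Flat R V :=
  flat_of_injective_mod_maximal_general (A := A) hN φ hinj
end

section
/- Let K be an algebraically closed field, m, n nonnegative integers, and u ≤ min(m, n). Every polynomial f in the polynomial ring K[x_{ij}] (1 ≤ i ≤ m, 1 ≤ j ≤ n) that vanishes at every m × n matrix over K of rank exactly u also vanishes at every m × n matrix over K of rank at most u. Equivalently, the set of matrices of rank exactly u is Zariski dense in the determinantal variety of matrices of rank at most u. -/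
/-!
Downward induction on the rank. If `A` has rank `r < min m n`, pick a standard basis vector `e_i`
outside the column space of `A` and a kernel vector `v` with `v j ≠ 0`; then `A + t • E_ij` has
rank `r + 1` for every `t ≠ 0`. So `f` restricted to the line `t ↦ A + t • E_ij` is a
univariate polynomial vanishing on the infinite set `K \ {0}`, hence it is zero, in particular
at `t = 0`.
-/

open Matrix MvPolynomial Module

theorem MvPolynomial.eval_eq_zero_of_eval_add_smul_eq_zero {σ R : Type*} [CommRing R]
    [IsDomain R] [Infinite R] {f : MvPolynomial σ R} {x y : σ → R}
    (h : ∀ t : R, t ≠ 0 → eval (x + t • y) f = 0) : eval x f = 0 := by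
  set g : Polynomial R :=
    aeval (fun s => Polynomial.C (x s) + Polynomial.C (y s) * Polynomial.X) f
  have hg : ∀ t, g.eval t = eval (x + t • y) f := by
    intro t
    rw [← Polynomial.coe_aeval_eq_eval, ← AlgHom.comp_apply, comp_aeval, aeval_eq_eval₂Hom,
      Algebra.algebraMap_self]
    congr 2
    funext s
    simp only [map_add, map_mul, Polynomial.aeval_C, Polynomial.aeval_X, Pi.add_apply,
      Pi.smul_apply, smul_eq_mul, Algebra.algebraMap_self, RingHom.id_apply]
    ring
  have hg0 : g = 0 := Polynomial.eq_zero_of_infinite_isRoot g <|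
    (Set.finite_singleton 0).infinite_compl.mono fun t ht => (hg t).trans (h t ht)
  simpa [hg0] using (hg 0).symm

namespace Matrix

variable {m n K : Type*} [Fintype n] [Field K] {A : Matrix m n K}

theorem range_mulVecLin_add_single [DecidableEq m] [DecidableEq n] {v : n → K}
    (hv : A *ᵥ v = 0) (i : m) {j : n} (hvj : v j ≠ 0) {t : K} (ht : t ≠ 0) :
    LinearMap.range (A + single i j t).mulVecLin =
      LinearMap.range A.mulVecLin ⊔ K ∙ Pi.single i 1 := by
  have hmul : ∀ w, (A + single i j t) *ᵥ w = A *ᵥ w + (t * w j) • Pi.single i 1 := by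
    intro w
    rw [add_mulVec, single_mulVec, ← Pi.single_smul', smul_eq_mul, mul_one]
    rfl
  apply le_antisymm
  · rintro _ ⟨w, rfl⟩
    rw [mulVecLin_apply, hmul]
    exact Submodule.add_mem_sup ⟨w, rfl⟩
      (Submodule.smul_mem _ _ (Submodule.mem_span_singleton_self _))
  · -- `A v = 0`: correcting by multiples of `v` absorbs the perturbation term, and `v` alone
    -- is sent onto a nonzero multiple of `Pi.single i 1`.
    refine sup_le (fun _ ⟨w, hw⟩ => ⟨w - (w j / v j) • v, ?_⟩) ?_
    · rw [← hw, mulVecLin_apply, mulVecLin_apply, hmul, mulVec_sub, mulVec_smul, hv]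
      simp [hvj]
    · refine (Submodule.span_singleton_le_iff_mem _ _).mpr ⟨(t * v j)⁻¹ • v, ?_⟩
      rw [mulVecLin_apply, mulVec_smul, hmul, hv, zero_add, smul_smul,
        inv_mul_cancel₀ (mul_ne_zero ht hvj), one_smul]

theorem rank_add_single [Fintype m] [DecidableEq m] [DecidableEq n] {v : n → K}
    (hv : A *ᵥ v = 0) {i : m} {j : n} (hi : Pi.single i 1 ∉ LinearMap.range A.mulVecLin)
    (hvj : v j ≠ 0) {t : K} (ht : t ≠ 0) :
    (A + single i j t).rank = A.rank + 1 := by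
  rw [rank, range_mulVecLin_add_single hv i hvj ht, Submodule.finrank_sup_span_singleton hi]
  rfl

theorem exists_single_notMem_range_mulVecLin [Fintype m] [DecidableEq m]
    (h : A.rank < Fintype.card m) :
    ∃ i, Pi.single i 1 ∉ LinearMap.range A.mulVecLin := by
  by_contra! hall
  have htop : LinearMap.range A.mulVecLin = ⊤ := by
    rw [eq_top_iff, ← (Pi.basisFun K m).span_eq, Submodule.span_le]
    rintro _ ⟨i, rfl⟩
    simpa using hall i
  rw [rank, htop, finrank_top, finrank_fintype_fun_eq_card] at h
  exact h.false

theorem exists_mulVec_eq_zero_of_rank_lt (h : A.rank < Fintype.card n) :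
    ∃ v ≠ 0, A *ᵥ v = 0 := by
  have hker : LinearMap.ker A.mulVecLin ≠ ⊥ := by
    rw [← LinearMap.ker_rangeRestrict]
    exact LinearMap.ker_ne_bot_of_finrank_lt (by rwa [finrank_fintype_fun_eq_card])
  obtain ⟨v, hv, hv0⟩ := Submodule.exists_mem_ne_zero_of_ne_bot hker
  exact ⟨v, hv0, hv⟩

theorem eval_eq_zero_of_forall_rank_eq_succ [Fintype m] [DecidableEq m] [DecidableEq n]
    [Infinite K] {f : MvPolynomial (m × n) K} (hm : A.rank < Fintype.card m)
    (hn : A.rank < Fintype.card n)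
    (hf : ∀ B : Matrix m n K, B.rank = A.rank + 1 → eval (Function.uncurry B) f = 0) :
    eval (Function.uncurry A) f = 0 := by
  obtain ⟨i, hi⟩ := exists_single_notMem_range_mulVecLin hm
  obtain ⟨v, hv0, hv⟩ := exists_mulVec_eq_zero_of_rank_lt hn
  obtain ⟨j, hvj⟩ : ∃ j, v j ≠ 0 := Function.ne_iff.mp hv0
  refine eval_eq_zero_of_eval_add_smul_eq_zero (y := Function.uncurry (single i j 1))
    fun t ht => ?_
  have hline : Function.uncurry A + t • Function.uncurry (single i j 1) =
      Function.uncurry (A + t • single i j 1) := rfl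
  rw [hline, smul_single, smul_eq_mul, mul_one]
  exact hf _ (rank_add_single hv hi hvj ht)

end Matrix

/-- Let `K` be an algebraically closed field and `u ≤ min m n`. Every polynomial in the
entries of a generic `m × n` matrix that vanishes at every matrix of rank exactly `u`
also vanishes at every matrix of rank at most `u`: the matrices of rank exactly `u` are
dense in the determinantal variety of matrices of rank at most `u`. -/
theorem vanish_on_rank_le_of_vanish_on_rank_eq
    {K : Type*} [Field K] [IsAlgClosed K] (m n u : ℕ) (hu : u ≤ min m n)
    (f : MvPolynomial (Fin m × Fin n) K)
    (hf : ∀ A : Matrix (Fin m) (Fin n) K, A.rank = u →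
      MvPolynomial.eval (fun p => A p.1 p.2) f = 0) :
    ∀ A : Matrix (Fin m) (Fin n) K, A.rank ≤ u →
      MvPolynomial.eval (fun p => A p.1 p.2) f = 0 := by
  intro A hA
  refine Nat.decreasingInduction
    (motive := fun r _ => ∀ B : Matrix (Fin m) (Fin n) K, B.rank = r →
      eval (Function.uncurry B) f = 0)
    (fun r hr ih B hB => ?_) hf hA A rfl
  subst hB
  exact eval_eq_zero_of_forall_rank_eq_succ (by rw [Fintype.card_fin]; omega)
    (by rw [Fintype.card_fin]; omega) ih
end
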